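/- Let N be a ℤ[t]-submodule of a length-one ℤ[t]-module M of exponent 2ⁿ. Then N has colength one in M (i.e. M/N has length one) if and only if N equals its closure N̄. -/

import Mathlib

/-- An `R`-module `M` has *length one* if there is a short exact sequence
`0 → F₁ → F₀ → M → 0` with `F₀`, `F₁` finitely generated free `R`-modules. -/
def IsLengthOne (R M : Type*) [CommRing R] [AddCommGroup M] [Module R M] : Prop :=
  ∃ (k l : ℕ) (f : (Fin k → R) →ₗ[R] (Fin l → R)) (g : (Fin l → R) →ₗ[R] M),
    Function.Injective f ∧ Function.Surjective g ∧ LinearMap.range f = LinearMap.ker g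

/-- The closure `N̄ = {x ∈ M : p • x ∈ N for some p ∈ ℤ[t] with p ∉ 2ℤ[t]}` of a
submodule `N` of a `ℤ[t]`-module `M`, as a set. -/
def closureSet {M : Type*} [AddCommGroup M] [Module (Polynomial ℤ) M]
    (N : Submodule (Polynomial ℤ) M) : Set M :=
  {x | ∃ p : Polynomial ℤ, p ∉ Ideal.span {(2 : Polynomial ℤ)} ∧ p • x ∈ N}

/-!
In `R = ℤ[t]` the element `2` is prime and `R ⧸ (2) ≃ 𝔽₂[t]` is a principal ideal domain.
If `M ⧸ N` has length one, an element `x` killed by `2` and by some `p ∉ (2)` vanishes: lifting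
`x` to a free module `F₀`, the relations `2x̃ = f a`, `p x̃ = f b` give `p a = 2 b`, so `2 ∣ a`
and `x̃ ∈ f(F₀)`. Since `M ⧸ N` has exponent `2ⁿ`, it therefore has no `p`-torsion, i.e. `N` is
closed. Conversely, if `N` is closed then `M ⧸ N` has no such torsion; in
`0 → ker 2 → M ⧸ N → 2(M ⧸ N) → 0` the kernel is a finitely generated torsion-free, hence free,
`𝔽₂[t]`-module, presented over `R` by multiplication by `2`, and the image has exponent `2ⁿ⁻¹`,
so induction on `n` and the horseshoe lemma show that `M ⧸ N` has length one.
-/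

open LinearMap
open Function (Injective Surjective)

section LengthOne

variable {R : Type*} [CommRing R]

theorem isLengthOne_of_presentation {M F₁ F₀ : Type*} [AddCommGroup M] [Module R M]
    [AddCommGroup F₁] [Module R F₁] [Module.Free R F₁] [Module.Finite R F₁]
    [AddCommGroup F₀] [Module R F₀] [Module.Free R F₀] [Module.Finite R F₀]
    (f : F₁ →ₗ[R] F₀) (g : F₀ →ₗ[R] M) (hf : Injective f) (hg : Surjective g)
    (hfg : range f = ker g) : IsLengthOne R M := by
  let e₁ := ((Module.Free.chooseBasis R F₁).reindex (Fintype.equivFin _)).equivFun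
  let e₀ := ((Module.Free.chooseBasis R F₀).reindex (Fintype.equivFin _)).equivFun
  refine ⟨_, _, e₀.toLinearMap ∘ₗ f ∘ₗ e₁.symm.toLinearMap, g ∘ₗ e₀.symm.toLinearMap,
    e₀.injective.comp (hf.comp e₁.symm.injective), hg.comp e₀.symm.surjective, ?_⟩
  rw [range_comp, range_comp, LinearEquiv.range, Submodule.map_top, hfg, ker_comp,
    Submodule.map_equiv_eq_comap_symm]

theorem isLengthOne_of_subsingleton (M : Type*) [AddCommGroup M] [Module R M] [Subsingleton M] :
    IsLengthOne R M :=
  ⟨0, 0, .id, 0, Function.injective_id, fun x => ⟨0, Subsingleton.elim _ _⟩, by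
    rw [range_id, ker_zero]⟩

theorem exists_comp_eq_of_range_le {F M N : Type*} [AddCommGroup F] [Module R F]
    [Module.Projective R F] [AddCommGroup M] [Module R M] [AddCommGroup N] [Module R N]
    (h : F →ₗ[R] N) (k : M →ₗ[R] N) (hle : range h ≤ range k) : ∃ w : F →ₗ[R] M, k ∘ₗ w = h := by
  obtain ⟨w, hw⟩ := Module.projective_lifting_property k.rangeRestrict
    (h.codRestrict _ fun x => hle (mem_range_self h x)) k.surjective_rangeRestrict
  exact ⟨w, ext fun x => congr_arg Subtype.val (congr($hw x))⟩

theorem isLengthOne_of_exact {A P C : Type*} [AddCommGroup A] [Module R A]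
    [AddCommGroup P] [Module R P] [AddCommGroup C] [Module R C]
    (ι : A →ₗ[R] P) (π : P →ₗ[R] C) (hι : Injective ι) (hπ : Surjective π)
    (hexact : range ι = ker π) (hA : IsLengthOne R A) (hC : IsLengthOne R C) :
    IsLengthOne R P := by
  obtain ⟨kA, lA, fA, gA, hfA, hgA, hA⟩ := hA
  obtain ⟨kC, lC, fC, gC, hfC, hgC, hC⟩ := hC
  obtain ⟨σ, hσ⟩ := exists_comp_eq_of_range_le gC π (by simp [range_eq_top.2 hπ])
  have hπσ : ∀ y, π (σ y) = gC y := fun y => congr($hσ y)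
  have hker : range (ι ∘ₗ gA) = ker π := by
    rw [range_comp, range_eq_top.2 hgA, Submodule.map_top, hexact]
  have hgAfA : ∀ u, gA (fA u) = 0 := fun u => (hA ▸ mem_range_self fA u :)
  obtain ⟨W, hW⟩ := exists_comp_eq_of_range_le (σ ∘ₗ fC) (ι ∘ₗ gA) <| by
    rintro _ ⟨v, rfl⟩
    rw [hker, mem_ker, LinearMap.comp_apply, hπσ]
    exact (hC ▸ mem_range_self fC v :)
  have hιgAW : ∀ v, ι (gA (W v)) = σ (fC v) := fun v => congr($hW v)
  -- `P` is generated by `ι ∘ gA` and `σ`; a relation `fC v` of `C` lifts to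
  -- `ι (gA (W v)) = σ (fC v)`, whence the relations `(fA u - W v, fC v)`.
  let f := (fA ∘ₗ fst R _ _ - W ∘ₗ snd R _ _).prod (fC ∘ₗ snd R _ _)
  let g := (ι ∘ₗ gA).coprod σ
  have hf : ∀ u v, f (u, v) = (fA u - W v, fC v) := fun _ _ => rfl
  have hg : ∀ x y, g (x, y) = ι (gA x) + σ y := fun _ _ => rfl
  refine isLengthOne_of_presentation f g ?_ ?_ ?_
  · rintro ⟨u, v⟩ ⟨u', v'⟩ h
    rw [hf, hf, Prod.mk.injEq] at h
    obtain rfl := hfC h.2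
    obtain rfl := hfA (sub_left_inj.1 h.1)
    rfl
  · intro x
    obtain ⟨y, hy⟩ := hgC (π x)
    obtain ⟨u, hu⟩ : x - σ y ∈ range (ι ∘ₗ gA) := by
      rw [hker, mem_ker, map_sub, hπσ, hy, sub_self]
    exact ⟨(u, y), by rw [hg, ← LinearMap.comp_apply, hu, sub_add_cancel]⟩
  · refine le_antisymm ?_ fun ⟨x, y⟩ hxy => ?_
    · rintro _ ⟨⟨u, v⟩, rfl⟩
      rw [mem_ker, hf, hg, map_sub, map_sub, hgAfA, hιgAW, map_zero, zero_sub, neg_add_cancel]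
    rw [mem_ker, hg] at hxy
    obtain ⟨v, rfl⟩ : y ∈ range fC := by
      have hιgA : ι (gA x) ∈ ker π := hker ▸ mem_range_self (ι ∘ₗ gA) x
      rw [hC, mem_ker, ← hπσ]
      simpa [mem_ker.1 hιgA] using congr_arg π hxy
    obtain ⟨u, hu⟩ : x + W v ∈ range fA := by
      rw [hA, mem_ker]
      exact hι (by rw [map_add, map_add, hιgAW, hxy, map_zero])
    exact ⟨(u, v), by rw [hf, hu, add_sub_cancel_right]⟩

theorem IsLengthOne.finite {M : Type*} [AddCommGroup M] [Module R M] (hM : IsLengthOne R M) :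
    Module.Finite R M :=
  let ⟨_, _, _, _, _, hg, _⟩ := hM
  .of_surjective _ hg

end LengthOne

section Prime

variable {R : Type*} [CommRing R] [IsDomain R] {q : R}

theorem IsLengthOne.eq_zero_of_smul_eq_zero {M : Type*} [AddCommGroup M] [Module R M]
    (hM : IsLengthOne R M) (hq : Prime q) {p : R} (hp : ¬ q ∣ p) {x : M}
    (hpx : p • x = 0) (hqx : q • x = 0) : x = 0 := by
  obtain ⟨k, l, f, g, hf, hg, hfg⟩ := hM
  obtain ⟨z, rfl⟩ := hg x
  obtain ⟨a, ha⟩ : q • z ∈ range f := by rw [hfg, mem_ker, map_smul, hqx]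
  obtain ⟨b, hb⟩ : p • z ∈ range f := by rw [hfg, mem_ker, map_smul, hpx]
  have hpa : p • a = q • b := hf (by rw [map_smul, map_smul, ha, hb, smul_comm])
  choose c hc using fun i => (hq.dvd_or_dvd ⟨b i, congr_fun hpa i⟩).resolve_left hp
  have hfc : f c = z := by
    refine smul_right_injective _ hq.ne_zero (?_ : q • f c = q • z)
    rw [← ha, ← map_smul]
    exact congr_arg f (funext hc).symm
  rw [← hfc, ← mem_ker, ← hfg]
  exact mem_range_self f c

theorem IsLengthOne.eq_zero_of_smul_eq_zero_of_pow_smul_eq_zero {M : Type*} [AddCommGroup M]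
    [Module R M] (hM : IsLengthOne R M) (hq : Prime q) {p : R} (hp : ¬ q ∣ p) {n : ℕ} {x : M}
    (hpx : p • x = 0) (hqx : q ^ n • x = 0) : x = 0 := by
  induction n generalizing x with
  | zero => rwa [pow_zero, one_smul] at hqx
  | succ n ih =>
    refine ih hpx (hM.eq_zero_of_smul_eq_zero hq hp ?_ ?_)
    · rw [smul_comm, hpx, smul_zero]
    · rwa [← mul_smul, ← pow_succ']

theorem isLengthOne_of_smul_eq_zero [IsPrincipalIdealRing (R ⧸ Ideal.span {q})] (hq : Prime q)
    {P : Type*} [AddCommGroup P] [Module R P] [Module.Finite R P] (hqP : ∀ x : P, q • x = 0)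
    (hP : ∀ p : R, ¬ q ∣ p → ∀ x : P, p • x = 0 → x = 0) : IsLengthOne R P := by
  have : (Ideal.span {q}).IsPrime := (Ideal.span_singleton_prime hq.ne_zero).2 hq
  have htor : Module.IsTorsionBySet R P (Ideal.span {q}) :=
    (Module.isTorsionBySet_span_singleton_iff q).2 hqP
  let := htor.module
  have := htor.isScalarTower (S := R)
  have : Module.Finite (R ⧸ Ideal.span {q}) P := .of_restrictScalars_finite R _ _
  have : Module.IsTorsionFree (R ⧸ Ideal.span {q}) P := .of_smul_eq_zero fun r x h => by
    obtain ⟨p, rfl⟩ := Ideal.Quotient.mk_surjective r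
    rw [htor.mk_smul] at h
    by_cases hp : q ∣ p
    · exact .inl (Ideal.Quotient.eq_zero_iff_mem.2 (Ideal.mem_span_singleton.2 hp))
    · exact .inr (hP p hp x h)
  let b := Module.Free.chooseBasis (R ⧸ Ideal.span {q}) P
  refine isLengthOne_of_presentation (q • LinearMap.id) (Fintype.linearCombination R (b ·))
    (smul_right_injective _ hq.ne_zero) ?_ ?_
  · rw [← range_eq_top, Fintype.range_linearCombination,
      ← Submodule.restrictScalars_span R _ (Ideal.Quotient.mk_surjective (I := Ideal.span {q})),
      b.span_eq, Submodule.restrictScalars_top]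
  refine le_antisymm ?_ fun z hz => ?_
  · rintro _ ⟨z, rfl⟩
    simp [hqP]
  have hz' : ∀ i, Ideal.Quotient.mk _ (z i) = 0 := Fintype.linearIndependent_iff.1
    b.linearIndependent _ (by simpa [htor.mk_smul, Fintype.linearCombination_apply] using hz)
  choose w hw using fun i => Ideal.mem_span_singleton.1 (Ideal.Quotient.eq_zero_iff_mem.1 (hz' i))
  exact ⟨w, funext fun i => (hw i).symm⟩

theorem isLengthOne_of_pow_smul_eq_zero [IsNoetherianRing R]
    [IsPrincipalIdealRing (R ⧸ Ideal.span {q})] (hq : Prime q) {n : ℕ} {P : Type*}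
    [AddCommGroup P] [Module R P] [Module.Finite R P] (hqP : ∀ x : P, q ^ n • x = 0)
    (hP : ∀ p : R, ¬ q ∣ p → ∀ x : P, p • x = 0 → x = 0) : IsLengthOne R P := by
  induction n generalizing P with
  | zero =>
    have : Subsingleton P := ⟨fun x y => by simpa using (hqP x).trans (hqP y).symm⟩
    exact isLengthOne_of_subsingleton P
  | succ n ih =>
    have hsub : ∀ S : Submodule R P, ∀ p : R, ¬ q ∣ p → ∀ x : S, p • x = 0 → x = 0 :=
      fun S p hp x hx => Subtype.ext (hP p hp x (congr_arg Subtype.val hx))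
    let φ : P →ₗ[R] P := q • LinearMap.id
    refine isLengthOne_of_exact (ker φ).subtype φ.rangeRestrict (ker φ).injective_subtype
      φ.surjective_rangeRestrict (by rw [Submodule.range_subtype, ker_rangeRestrict])
      (isLengthOne_of_smul_eq_zero hq (fun x => Subtype.ext x.2) (hsub _))
      (ih ?_ (hsub _))
    rintro ⟨_, y, rfl⟩
    ext
    change q ^ n • q • y = 0
    rw [← mul_smul, ← pow_succ, hqP]

theorem isLengthOne_quotient_iff [IsNoetherianRing R] [IsPrincipalIdealRing (R ⧸ Ideal.span {q})]
    (hq : Prime q) {M : Type*} [AddCommGroup M] [Module R M] {n : ℕ}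
    (hexp : ∀ x : M, q ^ n • x = 0) (hM : IsLengthOne R M) (N : Submodule R M) :
    IsLengthOne R (M ⧸ N) ↔ ∀ p : R, ¬ q ∣ p → ∀ x : M, p • x ∈ N → x ∈ N := by
  have hexpQ : ∀ y : M ⧸ N, q ^ n • y = 0 := fun y => by
    obtain ⟨x, rfl⟩ := N.mkQ_surjective y
    rw [← map_smul, hexp, map_zero]
  have hmkQ : ∀ (p : R) (x : M), p • N.mkQ x = 0 ↔ p • x ∈ N := fun p x => by
    rw [← map_smul, ← mem_ker, Submodule.ker_mkQ]
  refine ⟨fun hL p hp x hpx => ?_, fun hN => ?_⟩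
  · rw [← Submodule.ker_mkQ N, mem_ker]
    exact hL.eq_zero_of_smul_eq_zero_of_pow_smul_eq_zero hq hp ((hmkQ p x).2 hpx) (hexpQ _)
  have := hM.finite
  refine isLengthOne_of_pow_smul_eq_zero hq hexpQ fun p hp y hpy => ?_
  obtain ⟨x, rfl⟩ := N.mkQ_surjective y
  rw [← mem_ker, Submodule.ker_mkQ]
  exact hN p hp x ((hmkQ p x).1 hpy)

end Prime

instance : IsPrincipalIdealRing (Polynomial ℤ ⧸ Ideal.span {(2 : Polynomial ℤ)}) := by
  have h : (Ideal.span {(2 : ℤ)}).map Polynomial.C = Ideal.span {(2 : Polynomial ℤ)} := by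
    rw [Ideal.map_span, Set.image_singleton, map_ofNat]
  let e : Polynomial (ZMod 2) ≃+* _ :=
    ((Polynomial.mapEquiv (Int.quotientSpanEquivZMod 2).symm).trans
      (Ideal.polynomialQuotientEquivQuotientPolynomial _)).trans (Ideal.quotEquivOfEq h)
  exact .of_surjective e.toRingHom e.surjective

theorem Polynomial.prime_two_int : Prime (2 : Polynomial ℤ) := by
  simpa using Polynomial.prime_C_iff.2 Int.prime_two

theorem closureSet_eq_iff {M : Type*} [AddCommGroup M] [Module (Polynomial ℤ) M]
    (N : Submodule (Polynomial ℤ) M) :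
    closureSet N = N ↔ ∀ p : Polynomial ℤ, ¬ 2 ∣ p → ∀ x : M, p • x ∈ N → x ∈ N := by
  simp only [closureSet, Ideal.mem_span_singleton, Set.ext_iff, SetLike.mem_coe, Set.mem_ofPred_eq]
  refine ⟨fun h p hp x hpx => (h x).1 ⟨p, hp, hpx⟩, fun h x => ⟨fun ⟨p, hp, hpx⟩ => h p hp x hpx,
    fun hx => ⟨1, Polynomial.prime_two_int.not_dvd_one, by rwa [one_smul]⟩⟩⟩

/-- Let `N` be a `ℤ[t]`-submodule of a length-one `ℤ[t]`-module `M` of exponent `2ⁿ`.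
Then `N` has colength one in `M` (i.e. `M/N` has length one) iff `N` equals its closure. -/
theorem colengthOne_iff_closed
    (M : Type) [AddCommGroup M] [Module (Polynomial ℤ) M]
    (n : ℕ) (hexp : ∀ x : M, (2 : Polynomial ℤ) ^ n • x = 0)
    (hM : IsLengthOne (Polynomial ℤ) M)
    (N : Submodule (Polynomial ℤ) M) :
    IsLengthOne (Polynomial ℤ) (M ⧸ N) ↔ closureSet N = (N : Set M) := by
  rw [isLengthOne_quotient_iff Polynomial.prime_two_int hexp hM N, closureSet_eq_iff]
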